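/- Let v : ℝ^p → ℝ be convex with λ* ∈ ∂v(0). Suppose a point ū with constraint residual ξ̄ satisfies f(ū) ≥ v(ξ̄), and suppose C'/(t+1) - ρ‖ξ̄‖ ≥ f(ū) - v(0) for constants C' ≥ 0, t ≥ 0, where ρ = ‖λ*‖ + 1. Then ‖ξ̄‖ ≤ C'/(t+1) and -ρC'/(t+1) ≤ f(ū) - v(0) ≤ C'/(t+1). -/
import Mathlib

open RealInnerProductSpace

theorem stmt_6 {p : ℕ} (v : EuclideanSpace ℝ (Fin p) → ℝ)
    (hv : ConvexOn ℝ Set.univ v)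
    (lamstar : EuclideanSpace ℝ (Fin p))
    (hsub : ∀ ξ, v ξ ≥ v 0 + ⟪lamstar, ξ⟫)
    (ρ C' : ℝ) (hρ : ρ = ‖lamstar‖ + 1) (hC' : 0 ≤ C')
    (t : ℕ) (F : ℝ) (ξbar : EuclideanSpace ℝ (Fin p))
    (hF : F ≥ v ξbar)
    (hbound : F - v 0 ≤ C' / (t + 1) - ρ * ‖ξbar‖) :
    ‖ξbar‖ ≤ C' / (t + 1) ∧
      -(ρ * C') / (t + 1) ≤ F - v 0 ∧ F - v 0 ≤ C' / (t + 1) := by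
  have hip : |⟪lamstar, ξbar⟫| ≤ ‖lamstar‖ * ‖ξbar‖ := abs_real_inner_le_norm _ _
  have hlow : -(‖lamstar‖ * ‖ξbar‖) ≤ F - v 0 := by
    have := hsub ξbar
    have h1 : -(‖lamstar‖ * ‖ξbar‖) ≤ ⟪lamstar, ξbar⟫ := neg_le_of_abs_le hip
    linarith
  have ht : (0:ℝ) < t + 1 := by positivity
  have hn : (0:ℝ) ≤ ‖ξbar‖ := norm_nonneg _
  have hxi : ‖ξbar‖ ≤ C' / (t + 1) := by
    nlinarith [hbound, hlow]
  have hρn : 0 ≤ ρ := by rw [hρ]; positivity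
  refine ⟨hxi, ?_, by nlinarith⟩
  have : -(ρ * (C' / (t+1))) ≤ F - v 0 := by nlinarith
  rw [neg_div, mul_div_assoc]
  exact this
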